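/- On the domain D = {(x¹,x²,y¹,y²) ∈ ℝ⁴ : x¹ ≠ 0, y¹ ≠ 0}, for the web function f¹ = x¹ + y¹, f² = −x¹y² + x²y¹, the curvature tensor satisfies: b¹_{jkl} = 0 for all j,k,l; b²₂₁₁ = b²₁₂₂ = b²₂₁₂ = b²₂₂₁ = b²₂₂₂ = 0; b²₁₁₁ = (1/y¹ − 1/x¹)(x²/x¹ − y²/y¹); b²₁₂₁ = −1/(y¹)²; and b²₁₁₂ = 1/(x¹)². -/

import Mathlib

noncomputable section

/-- Points of ℝ⁴ with coordinates (x¹, x², y¹, y²). -/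
abbrev Pt : Type := ℝ × ℝ × ℝ × ℝ

/-- Partial derivative with respect to x^j (j = 0 ↦ x¹, j = 1 ↦ x²). -/
def pdx (j : Fin 2) (F : Pt → ℝ) (p : Pt) : ℝ :=
  if j = 0 then deriv (fun t => F (t, p.2.1, p.2.2.1, p.2.2.2)) p.1
  else deriv (fun t => F (p.1, t, p.2.2.1, p.2.2.2)) p.2.1

/-- Partial derivative with respect to y^k (k = 0 ↦ y¹, k = 1 ↦ y²). -/
def pdy (k : Fin 2) (F : Pt → ℝ) (p : Pt) : ℝ :=
  if k = 0 then deriv (fun t => F (p.1, p.2.1, t, p.2.2.2)) p.2.2.1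
  else deriv (fun t => F (p.1, p.2.1, p.2.2.1, t)) p.2.2.2

/-- Jacobian matrix f̄ with entries f̄^i_j = ∂f^i/∂x^j. -/
def fbar (f : Fin 2 → Pt → ℝ) (p : Pt) : Matrix (Fin 2) (Fin 2) ℝ :=
  Matrix.of fun i j => pdx j (f i) p

/-- Jacobian matrix f̃ with entries f̃^i_k = ∂f^i/∂y^k. -/
def ftil (f : Fin 2 → Pt → ℝ) (p : Pt) : Matrix (Fin 2) (Fin 2) ℝ :=
  Matrix.of fun i k => pdy k (f i) p

/-- Connection coefficients Γ^i_{jk} = −Σ_{l,m} (∂²f^i/∂x^l∂y^m) ḡ^l_j g̃^m_k,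
where ḡ = f̄⁻¹ and g̃ = f̃⁻¹. -/
def Gam (f : Fin 2 → Pt → ℝ) (i j k : Fin 2) (p : Pt) : ℝ :=
  - ∑ l : Fin 2, ∑ m : Fin 2,
      pdy m (pdx l (f i)) p * (fbar f p)⁻¹ l j * (ftil f p)⁻¹ m k

/-- Torsion tensor a^i_{jk} = (Γ^i_{jk} − Γ^i_{kj})/2. -/
def tors (f : Fin 2 → Pt → ℝ) (i j k : Fin 2) (p : Pt) : ℝ :=
  (Gam f i j k p - Gam f i k j p) / 2

/-- Curvature tensor b^i_{jkl}. -/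
def curv (f : Fin 2 → Pt → ℝ) (i j k l : Fin 2) (p : Pt) : ℝ :=
  (1/2) * ∑ m : Fin 2,
    ( pdx m (Gam f i k l) p * (fbar f p)⁻¹ m j
    + pdx m (Gam f i j l) p * (fbar f p)⁻¹ m k
    - pdy m (Gam f i k j) p * (ftil f p)⁻¹ m l
    - pdy m (Gam f i k l) p * (ftil f p)⁻¹ m j
    + Gam f m j l p * Gam f i k m p
    - Gam f m k j p * Gam f i m l p
    + 2 * Gam f m k l p * tors f i m j p )

/-- The web function: f¹ = x¹ + y¹, f² = −x¹y² + x²y¹. -/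
def w : Fin 2 → Pt → ℝ :=
  ![fun p => p.1 + p.2.2.1, fun p => -(p.1 * p.2.2.2) + p.2.1 * p.2.2.1]


/-!
Only f² has nonvanishing mixed second derivatives, so Γ¹ ≡ 0 and every term of b¹ contains a
factor Γ¹ or a derivative of it. On D the Jacobians f̄ and f̃ are triangular with explicit inverses,
which gives Γ²₁₁ = x²/x¹ − y²/y¹, Γ²₁₂ = −1/x¹, Γ²₂₁ = −1/y¹ and Γ²₂₂ = 0. Since D is open, these
formulas may be differentiated in place of Γ², and b² becomes a rational identity.
-/

open Filter Topology

theorem pdx_congr_of_eventuallyEq {F G : Pt → ℝ} {p : Pt} (h : F =ᶠ[𝓝 p] G) (j : Fin 2) :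
    pdx j F p = pdx j G p := by
  unfold pdx
  split_ifs
  · exact EventuallyEq.deriv_eq <|
      ((by fun_prop : Continuous fun t : ℝ => (t, p.2)).tendsto' p.1 p rfl).eventually h
  · exact EventuallyEq.deriv_eq <|
      ((by fun_prop : Continuous fun t : ℝ => (p.1, t, p.2.2)).tendsto' p.2.1 p rfl).eventually h

theorem pdy_congr_of_eventuallyEq {F G : Pt → ℝ} {p : Pt} (h : F =ᶠ[𝓝 p] G) (k : Fin 2) :
    pdy k F p = pdy k G p := by
  unfold pdy
  split_ifs
  · exact EventuallyEq.deriv_eq <|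
      ((by fun_prop : Continuous fun t : ℝ => (p.1, p.2.1, t, p.2.2.2)).tendsto'
        p.2.2.1 p rfl).eventually h
  · exact EventuallyEq.deriv_eq <|
      ((by fun_prop : Continuous fun t : ℝ => (p.1, p.2.1, p.2.2.1, t)).tendsto'
        p.2.2.2 p rfl).eventually h

theorem curv_eq_zero_of_Gam_eq_zero {f : Fin 2 → Pt → ℝ} {i : Fin 2}
    (h : ∀ j k, Gam f i j k = 0) (j k l : Fin 2) (p : Pt) : curv f i j k l p = 0 := by
  simp [curv, tors, pdx, pdy, h]

theorem Gam_w_zero (j k : Fin 2) : Gam w 0 j k = 0 := by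
  funext p
  simp [Gam, pdx, pdy, w]

theorem pdy_pdx_w_one (l m : Fin 2) (p : Pt) : pdy m (pdx l (w 1)) p = !![0, -1; 1, 0] l m := by
  fin_cases l <;> fin_cases m <;> simp [pdx, pdy, w]

section Jacobians

variable (x1 x2 y1 y2 : ℝ)

theorem fbar_w : fbar w (x1, x2, y1, y2) = !![1, 0; -y2, y1] := by
  ext i j
  fin_cases i <;> fin_cases j <;> simp [fbar, pdx, w]

theorem ftil_w : ftil w (x1, x2, y1, y2) = !![1, 0; x2, -x1] := by
  ext i j
  fin_cases i <;> fin_cases j <;> simp [ftil, pdy, w]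

theorem inv_fbar_w (hy : y1 ≠ 0) : (fbar w (x1, x2, y1, y2))⁻¹ = !![1, 0; y2 / y1, 1 / y1] := by
  rw [fbar_w]
  refine Matrix.inv_eq_left_inv ?_
  rw [Matrix.mul_fin_two, Matrix.one_fin_two]
  simp [hy]
  ring

theorem inv_ftil_w (hx : x1 ≠ 0) :
    (ftil w (x1, x2, y1, y2))⁻¹ = !![1, 0; x2 / x1, -(1 / x1)] := by
  rw [ftil_w]
  refine Matrix.inv_eq_left_inv ?_
  rw [Matrix.mul_fin_two, Matrix.one_fin_two]
  simp [hx]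
  ring

end Jacobians

def webDomain : Set Pt := {p | p.1 ≠ 0 ∧ p.2.2.1 ≠ 0}

theorem isOpen_webDomain : IsOpen webDomain :=
  (isOpen_ne.preimage continuous_fst).inter (isOpen_ne.preimage (by fun_prop))

def wGam (p : Pt) : Matrix (Fin 2) (Fin 2) ℝ :=
  !![p.2.1 / p.1 - p.2.2.2 / p.2.2.1, -1 / p.1; -1 / p.2.2.1, 0]

theorem Gam_w_one {p : Pt} (hp : p ∈ webDomain) (j k : Fin 2) : Gam w 1 j k p = wGam p j k := by
  obtain ⟨x1, x2, y1, y2⟩ := p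
  simp only [Gam, Fin.sum_univ_two, pdy_pdx_w_one, inv_fbar_w _ _ _ _ hp.2,
    inv_ftil_w _ _ _ _ hp.1]
  fin_cases j <;> fin_cases k <;> simp [wGam] <;> ring

theorem Gam_w_one_eventuallyEq {p : Pt} (hp : p ∈ webDomain) (j k : Fin 2) :
    Gam w 1 j k =ᶠ[𝓝 p] fun q => wGam q j k :=
  eventually_of_mem (isOpen_webDomain.mem_nhds hp) fun _ hq => Gam_w_one hq j k

section DerivativesOfGam

variable {x1 x2 y1 y2 : ℝ} (hx : x1 ≠ 0) (hy : y1 ≠ 0) (j k : Fin 2)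
include hx hy

theorem pdx_zero_Gam_w_one :
    pdx 0 (Gam w 1 j k) (x1, x2, y1, y2) = !![-x2 / x1 ^ 2, 1 / x1 ^ 2; 0, 0] j k := by
  rw [pdx_congr_of_eventuallyEq (Gam_w_one_eventuallyEq ⟨hx, hy⟩ j k)]
  fin_cases j <;> fin_cases k <;> simp [pdx, wGam]

theorem pdx_one_Gam_w_one :
    pdx 1 (Gam w 1 j k) (x1, x2, y1, y2) = !![1 / x1, 0; 0, 0] j k := by
  rw [pdx_congr_of_eventuallyEq (Gam_w_one_eventuallyEq ⟨hx, hy⟩ j k)]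
  fin_cases j <;> fin_cases k <;> simp [pdx, wGam]

theorem pdy_zero_Gam_w_one :
    pdy 0 (Gam w 1 j k) (x1, x2, y1, y2) = !![y2 / y1 ^ 2, 0; 1 / y1 ^ 2, 0] j k := by
  rw [pdy_congr_of_eventuallyEq (Gam_w_one_eventuallyEq ⟨hx, hy⟩ j k)]
  fin_cases j <;> fin_cases k <;> simp [pdy, wGam, neg_div]

theorem pdy_one_Gam_w_one :
    pdy 1 (Gam w 1 j k) (x1, x2, y1, y2) = !![-(1 / y1), 0; 0, 0] j k := by
  rw [pdy_congr_of_eventuallyEq (Gam_w_one_eventuallyEq ⟨hx, hy⟩ j k)]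
  fin_cases j <;> fin_cases k <;> simp [pdy, wGam]

end DerivativesOfGam

theorem stmt_6 (x1 x2 y1 y2 : ℝ) (h1 : x1 ≠ 0) (h2 : y1 ≠ 0) :
    (∀ j k l : Fin 2, curv w 0 j k l (x1, x2, y1, y2) = 0) ∧
    curv w 1 1 0 0 (x1, x2, y1, y2) = 0 ∧
    curv w 1 0 1 1 (x1, x2, y1, y2) = 0 ∧
    curv w 1 1 0 1 (x1, x2, y1, y2) = 0 ∧
    curv w 1 1 1 0 (x1, x2, y1, y2) = 0 ∧
    curv w 1 1 1 1 (x1, x2, y1, y2) = 0 ∧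
    curv w 1 0 0 0 (x1, x2, y1, y2) = (1 / y1 - 1 / x1) * (x2 / x1 - y2 / y1) ∧
    curv w 1 0 1 0 (x1, x2, y1, y2) = -(1 / y1 ^ 2) ∧
    curv w 1 0 0 1 (x1, x2, y1, y2) = 1 / x1 ^ 2 := by
  have hp : (x1, x2, y1, y2) ∈ webDomain := ⟨h1, h2⟩
  refine ⟨fun j k l => curv_eq_zero_of_Gam_eq_zero Gam_w_zero j k l _,
    ?_, ?_, ?_, ?_, ?_, ?_, ?_, ?_⟩ <;>
  · simp only [curv, tors, Fin.sum_univ_two, Gam_w_zero, Pi.zero_apply, Gam_w_one hp,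
      pdx_zero_Gam_w_one h1 h2, pdx_one_Gam_w_one h1 h2, pdy_zero_Gam_w_one h1 h2,
      pdy_one_Gam_w_one h1 h2, inv_fbar_w _ _ _ _ h2, inv_ftil_w _ _ _ _ h1, wGam,
      Matrix.of_apply, Matrix.cons_val', Matrix.cons_val_zero, Matrix.cons_val_one,
      Matrix.empty_val', Matrix.cons_val_fin_one]
    field_simp
    ring
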